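/- Let n ≥ 1. For every n×n real symmetric positive definite matrix X one has F(X) ≥ 0, and F(X) = 0 if and only if X = I. Consequently inf{ F(X) : X symmetric positive definite } = 0 and the infimum is attained exactly at X = I. -/

import Mathlib

/-- The objective function of Example 6.2 of the paper:
`F(X) = max{ ln det X, −4 ln det X + e^(−2 tr X) − e^(−2n), tr X⁻¹ − n }`. -/
noncomputable def Fmat (n : ℕ) (X : Matrix (Fin n) (Fin n) ℝ) : ℝ :=
  max (Real.log X.det)
    (max (-4 * Real.log X.det + Real.exp (-2 * X.trace) - Real.exp (-2 * n))
      (X⁻¹.trace - n))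

/-!
Writing `λᵢ > 0` for the eigenvalues of `Y`, the inequality `log λ ≤ λ - 1` summed over the
spectrum gives `log det Y ≤ tr Y - n`, with equality only when every `λᵢ = 1`, i.e. `Y = I`.
Applied to `Y = X⁻¹` this reads `-log det X ≤ tr X⁻¹ - n`: the first and third entries of `F`
cannot both be negative, and they vanish simultaneously only at `X = I`.
-/

namespace Matrix

variable {ι : Type*} [Fintype ι] [DecidableEq ι]

theorem log_det_inv (Y : Matrix ι ι ℝ) : Real.log Y⁻¹.det = -Real.log Y.det := by
  rw [det_nonsing_inv, Ring.inverse_eq_inv', Real.log_inv]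

theorem IsHermitian.eq_one_of_eigenvalues_eq_one {𝕜 : Type*} [RCLike 𝕜] {A : Matrix ι ι 𝕜}
    (hA : A.IsHermitian) (h : ∀ i, hA.eigenvalues i = 1) : A = 1 := by
  have hdiag : RCLike.ofReal ∘ hA.eigenvalues = fun _ ↦ (1 : 𝕜) := by ext i; simp [h i]
  conv_lhs => rw [hA.spectral_theorem, hdiag, diagonal_one, map_one]

namespace PosDef

variable {Y : Matrix ι ι ℝ}

theorem log_det_eq_sum (hY : Y.PosDef) :
    Real.log Y.det = ∑ i, Real.log (hY.isHermitian.eigenvalues i) := by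
  rw [hY.isHermitian.det_eq_prod_eigenvalues]
  exact Real.log_prod fun i _ ↦ (hY.eigenvalues_pos i).ne'

theorem trace_sub_card_eq_sum (hY : Y.PosDef) :
    Y.trace - Fintype.card ι = ∑ i, (hY.isHermitian.eigenvalues i - 1) := by
  simp [hY.isHermitian.trace_eq_sum_eigenvalues]

theorem log_det_le_trace_sub_card (hY : Y.PosDef) :
    Real.log Y.det ≤ Y.trace - Fintype.card ι := by
  rw [hY.log_det_eq_sum, hY.trace_sub_card_eq_sum]
  exact Finset.sum_le_sum fun i _ ↦ Real.log_le_sub_one_of_pos (hY.eigenvalues_pos i)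

theorem eq_one_of_trace_sub_card_le_log_det (hY : Y.PosDef)
    (h : Y.trace - Fintype.card ι ≤ Real.log Y.det) : Y = 1 := by
  refine hY.isHermitian.eq_one_of_eigenvalues_eq_one fun i ↦ ?_
  by_contra hi
  have hlt : Real.log Y.det < Y.trace - Fintype.card ι := by
    rw [hY.log_det_eq_sum, hY.trace_sub_card_eq_sum]
    exact Finset.sum_lt_sum
      (fun j _ ↦ Real.log_le_sub_one_of_pos (hY.eigenvalues_pos j))
      ⟨i, Finset.mem_univ i, Real.log_lt_sub_one_of_pos (hY.eigenvalues_pos i) hi⟩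
  exact hlt.not_ge h

theorem neg_log_det_le_trace_inv_sub_card (hY : Y.PosDef) :
    -Real.log Y.det ≤ Y⁻¹.trace - Fintype.card ι := by
  simpa [log_det_inv Y] using hY.inv.log_det_le_trace_sub_card

theorem eq_one_of_trace_inv_sub_card_le_neg_log_det (hY : Y.PosDef)
    (h : Y⁻¹.trace - Fintype.card ι ≤ -Real.log Y.det) : Y = 1 := by
  have hinv : Y⁻¹ = 1 := hY.inv.eq_one_of_trace_sub_card_le_log_det (by rwa [log_det_inv Y])
  rw [← nonsing_inv_nonsing_inv Y hY.det_pos.ne'.isUnit, hinv, inv_one]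

end PosDef

end Matrix

open Matrix

theorem Fmat_one (n : ℕ) : Fmat n 1 = 0 := by
  simp [Fmat]

theorem Fmat_nonneg {n : ℕ} {X : Matrix (Fin n) (Fin n) ℝ} (hX : X.PosDef) : 0 ≤ Fmat n X := by
  have key := hX.neg_log_det_le_trace_inv_sub_card
  rw [Fintype.card_fin] at key
  rcases le_or_gt 0 (Real.log X.det) with h | h
  · exact h.trans (le_max_left _ _)
  · exact (by linarith : (0 : ℝ) ≤ X⁻¹.trace - n).trans
      ((le_max_right _ _).trans (le_max_right _ _))

theorem Fmat_eq_zero_iff {n : ℕ} {X : Matrix (Fin n) (Fin n) ℝ} (hX : X.PosDef) :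
    Fmat n X = 0 ↔ X = 1 := by
  refine ⟨fun h ↦ hX.eq_one_of_trace_inv_sub_card_le_neg_log_det ?_, fun h ↦ h ▸ Fmat_one n⟩
  have hlog : Real.log X.det ≤ 0 := h ▸ le_max_left _ _
  have htr : X⁻¹.trace - n ≤ 0 := h ▸ (le_max_right _ _).trans (le_max_right _ _)
  rw [Fintype.card_fin]
  linarith

theorem stmt_12 {n : ℕ} :
    (∀ X : Matrix (Fin n) (Fin n) ℝ, X.PosDef → 0 ≤ Fmat n X) ∧
    (∀ X : Matrix (Fin n) (Fin n) ℝ, X.PosDef → (Fmat n X = 0 ↔ X = 1)) ∧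
    IsGLB {y | ∃ X : Matrix (Fin n) (Fin n) ℝ, X.PosDef ∧ y = Fmat n X} 0 := by
  refine ⟨fun X ↦ Fmat_nonneg, fun X ↦ Fmat_eq_zero_iff, IsLeast.isGLB ⟨?_, ?_⟩⟩
  · exact ⟨1, PosDef.one, (Fmat_one n).symm⟩
  · rintro y ⟨X, hX, rfl⟩
    exact Fmat_nonneg hX
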